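/- arXiv:2303.02539 — 5 statements merged into one kernel-verified Lean document; each statement's English description precedes it below -/
import Mathlib

section
/- A tropical ball B_l(x_0) is tropically convex (with max-plus algebra), with points considered modulo R·1: if d_tr(x_0, v) ≤ l and d_tr(x_0, w) ≤ l, then d_tr(x_0, a⊙v ⊕ b⊙w) ≤ l for all a, b ∈ R, where a⊙v ⊕ b⊙w denotes the coordinatewise maximum (max(a+v_i, b+w_i))_i. -/
noncomputable def tropDist {e : ℕ} [NeZero e] (v w : Fin e → ℝ) : ℝ :=
  Finset.univ.sup' Finset.univ_nonempty (fun i => v i - w i) -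
  Finset.univ.inf' Finset.univ_nonempty (fun i => v i - w i)

theorem tropBall_tropConvex {e : ℕ} [NeZero e] (x₀ v w : Fin e → ℝ) (l : ℝ)
    (hv : tropDist x₀ v ≤ l) (hw : tropDist x₀ w ≤ l) (a b : ℝ) :
    ∃ c : ℝ, tropDist x₀ (fun i => max (a + v i) (b + w i) + c) ≤ l := by
  refine ⟨0, ?_⟩
  unfold tropDist at *
  set SG := Finset.univ.sup' Finset.univ_nonempty (fun i => x₀ i - v i) with hSG
  set IG := Finset.univ.inf' Finset.univ_nonempty (fun i => x₀ i - v i) with hIG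
  set SH := Finset.univ.sup' Finset.univ_nonempty (fun i => x₀ i - w i) with hSH
  set IH := Finset.univ.inf' Finset.univ_nonempty (fun i => x₀ i - w i) with hIH
  have key : ∀ i : Fin e, x₀ i - (max (a + v i) (b + w i) + 0)
      = min (x₀ i - v i - a) (x₀ i - w i - b) := by
    intro i
    rcases le_total (a + v i) (b + w i) with h | h
    · rw [max_eq_right h, min_eq_right (by linarith)]; ring
    · rw [max_eq_left h, min_eq_left (by linarith)]; ring
  have hsup : Finset.univ.sup' Finset.univ_nonempty
      (fun i => x₀ i - (max (a + v i) (b + w i) + 0)) ≤ min (SG - a) (SH - b) := by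
    apply Finset.sup'_le
    intro i _
    rw [key i]
    exact min_le_min
      (sub_le_sub_right (Finset.le_sup' (fun i => x₀ i - v i) (Finset.mem_univ i)) a)
      (sub_le_sub_right (Finset.le_sup' (fun i => x₀ i - w i) (Finset.mem_univ i)) b)
  have hinf : min (IG - a) (IH - b) ≤ Finset.univ.inf' Finset.univ_nonempty
      (fun i => x₀ i - (max (a + v i) (b + w i) + 0)) := by
    apply Finset.le_inf'
    intro i _
    rw [key i]
    exact min_le_min
      (sub_le_sub_right (Finset.inf'_le (fun i => x₀ i - v i) (Finset.mem_univ i)) a)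
      (sub_le_sub_right (Finset.inf'_le (fun i => x₀ i - w i) (Finset.mem_univ i)) b)
  rcases le_total (IG - a) (IH - b) with h | h
  · have h1 : min (IG - a) (IH - b) = IG - a := min_eq_left h
    have h2 : min (SG - a) (SH - b) ≤ SG - a := min_le_left _ _
    linarith
  · have h1 : min (IG - a) (IH - b) = IH - b := min_eq_right h
    have h2 : min (SG - a) (SH - b) ≤ SH - b := min_le_right _ _
    linarith
end

section
/- Each coordinate of the tropical projection is bounded above by the corresponding coordinate of x: for π_P(x) defined as ⊕_l λ_l ⊙ v^l with λ_l = min_i(x_i − v^l_i), we have (π_P(x))_i ≤ x_i for all i ∈ [e], and if x ∈ tconv(V) then π_P(x) = x. -/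
noncomputable def tconv {e s : ℕ} [NeZero e] [NeZero s] (V : Fin s → (Fin e → ℝ)) : Set (Fin e → ℝ) :=
  {x | ∃ a : Fin s → ℝ, x = fun i => Finset.univ.sup' Finset.univ_nonempty (fun l => a l + V l i)}

noncomputable def tropProj {e s : ℕ} [NeZero e] [NeZero s] (V : Fin s → (Fin e → ℝ))
    (x : Fin e → ℝ) : Fin e → ℝ :=
  fun i => Finset.univ.sup' Finset.univ_nonempty
    (fun l => (Finset.univ.inf' Finset.univ_nonempty (fun j => x j - V l j)) + V l i)

theorem tropProj_le_and_fixed {e s : ℕ} [NeZero e] [NeZero s] (V : Fin s → (Fin e → ℝ))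
    (x : Fin e → ℝ) :
    (∀ i : Fin e, tropProj V x i ≤ x i) ∧ (x ∈ tconv V → tropProj V x = x) := by
  have hle : ∀ i : Fin e, tropProj V x i ≤ x i := by
    intro i
    apply Finset.sup'_le
    intro l _
    have h := Finset.inf'_le (b := i) (fun j => x j - V l j) (Finset.mem_univ i)
    linarith
  refine ⟨hle, ?_⟩
  rintro ⟨a, ha⟩
  funext i
  refine le_antisymm (hle i) ?_
  obtain ⟨l, _, hl⟩ := Finset.exists_mem_eq_sup' (Finset.univ_nonempty (α := Fin s))
    (fun l => a l + V l i)
  have hxi : x i = a l + V l i := by rw [ha]; exact hl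
  have hal : a l ≤ Finset.univ.inf' Finset.univ_nonempty (fun j => x j - V l j) := by
    apply Finset.le_inf'
    intro j _
    have : a l + V l j ≤ x j := by
      rw [ha]; exact Finset.le_sup' (fun l => a l + V l j) (Finset.mem_univ l)
    linarith
  calc x i = a l + V l i := hxi
    _ ≤ _ := by linarith
    _ ≤ tropProj V x i :=
        Finset.le_sup' (fun l => (Finset.univ.inf' Finset.univ_nonempty
          (fun j => x j - V l j)) + V l i) (Finset.mem_univ l)
end

section
/- The tropical projection is the nearest point in the tropical polytope: for any x ∈ R^e and any y ∈ tconv(V), d_tr(x, π_P(x)) ≤ d_tr(x, y). -/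
theorem tropProj_nearest {e s : ℕ} [NeZero e] [NeZero s] (V : Fin s → (Fin e → ℝ))
    (x : Fin e → ℝ) :
    ∀ y ∈ tconv V, tropDist x (tropProj V x) ≤ tropDist x y := by
  rintro y ⟨a, rfl⟩
  set y : Fin e → ℝ := fun i => Finset.univ.sup' Finset.univ_nonempty (fun l => a l + V l i)
    with hy
  set p : Fin e → ℝ := tropProj V x with hp
  set μ : ℝ := Finset.univ.inf' Finset.univ_nonempty (fun i => x i - y i) with hμ
  -- p i ≤ x i
  have hpx : ∀ i, p i ≤ x i := by
    intro i
    apply Finset.sup'_le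
    intro l _
    have := Finset.inf'_le (fun j => x j - V l j) (Finset.mem_univ i)
    linarith
  have hinf : 0 ≤ Finset.univ.inf' Finset.univ_nonempty (fun i => x i - p i) := by
    apply Finset.le_inf'
    intro i _
    have := hpx i
    linarith
  -- y i + μ ≤ p i
  have hyp : ∀ i, y i + μ ≤ p i := by
    intro i
    have : y i ≤ p i - μ := by
      apply Finset.sup'_le
      intro l _
      have hal : a l + μ ≤ Finset.univ.inf' Finset.univ_nonempty (fun j => x j - V l j) := by
        apply Finset.le_inf'
        intro j _
        have h1 : μ ≤ x j - y j := Finset.inf'_le _ (Finset.mem_univ j)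
        have h2 : a l + V l j ≤ y j :=
          Finset.le_sup' (fun l => a l + V l j) (Finset.mem_univ l)
        linarith
      have h3 : Finset.univ.inf' Finset.univ_nonempty (fun j => x j - V l j) + V l i ≤ p i :=
        Finset.le_sup'
          (fun l => Finset.univ.inf' Finset.univ_nonempty (fun j => x j - V l j) + V l i)
          (Finset.mem_univ l)
      linarith
    linarith
  have hkey : ∀ i, x i - p i ≤ tropDist x y := by
    intro i
    have h1 : x i - y i ≤ Finset.univ.sup' Finset.univ_nonempty (fun j => x j - y j) :=
      Finset.le_sup' (fun j => x j - y j) (Finset.mem_univ i)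
    have h2 := hyp i
    unfold tropDist
    rw [← hμ]
    linarith
  have hsup : Finset.univ.sup' Finset.univ_nonempty (fun i => x i - p i) ≤ tropDist x y :=
    Finset.sup'_le _ _ (fun i _ => hkey i)
  show tropDist x p ≤ tropDist x y
  unfold tropDist
  have : Finset.univ.sup' Finset.univ_nonempty (fun i => x i - p i) ≤ tropDist x y := hsup
  unfold tropDist at this
  linarith
end

section
/- The tropical ball B_l(x_0) ⊂ R^e/R1 is a tropical convex hull of e points: with representatives normalized so that the first coordinate is 0, B_l(x_0) = tconv({(x_0 shifted by −l in coords 2..e), (x_0 + l·e_2), ..., (x_0 + l·e_e)}). -/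
noncomputable def ballVerts {e : ℕ} [NeZero e] (x₀ : Fin e → ℝ) (l : ℝ) : Fin e → (Fin e → ℝ) :=
  fun k i => if k = 0 then (if i = 0 then 0 else x₀ i - l)
             else x₀ i + (if i = k then l else 0)

lemma vdiff {e : ℕ} [NeZero e] (x₀ : Fin e → ℝ) (hx₀ : x₀ 0 = 0) (l : ℝ) (hl : 0 < l)
    (k i j : Fin e) :
    (ballVerts x₀ l k j - x₀ j) - (ballVerts x₀ l k i - x₀ i) ≤ l := by
  simp only [ballVerts]
  split_ifs <;> subst_vars <;> simp_all <;> linarith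

theorem tropBall_eq_tconv_verts {e : ℕ} [NeZero e] (x₀ : Fin e → ℝ) (hx₀ : x₀ 0 = 0)
    (l : ℝ) (hl : 0 < l) (y : Fin e → ℝ) (hy : y 0 = 0) :
    tropDist x₀ y ≤ l ↔
      ∃ a : Fin e → ℝ,
        y = fun i => Finset.univ.sup' Finset.univ_nonempty
          (fun k => a k + ballVerts x₀ l k i) := by
  constructor
  · intro h
    have key : ∀ i j : Fin e, (x₀ i - y i) - (x₀ j - y j) ≤ l := by
      intro i j
      have h1 := Finset.le_sup' (fun i => x₀ i - y i) (Finset.mem_univ i)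
      have h2 := Finset.inf'_le (fun i => x₀ i - y i) (Finset.mem_univ j)
      unfold tropDist at h
      linarith
    refine ⟨fun k => Finset.univ.inf' Finset.univ_nonempty
      (fun j => y j - ballVerts x₀ l k j), ?_⟩
    funext i
    apply le_antisymm
    · -- y i ≤ sup, witness k = i
      have hmin : ∀ j : Fin e, y i - ballVerts x₀ l i i ≤ y j - ballVerts x₀ l i j := by
        intro j
        by_cases hi : i = 0
        · subst hi
          by_cases hj : j = 0
          · subst hj; exact le_refl _
          · have hk := key j 0
            simp only [ballVerts, if_pos rfl, if_true, if_neg hj]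
            rw [hx₀, hy] at hk
            rw [hy]
            linarith
        · by_cases hj : j = i
          · subst hj; exact le_refl _
          · have hk := key j i
            simp only [ballVerts, if_neg hi, if_pos rfl, if_true, if_neg hj]
            linarith
      have ha : Finset.univ.inf' Finset.univ_nonempty
          (fun j => y j - ballVerts x₀ l i j) = y i - ballVerts x₀ l i i := by
        apply le_antisymm
        · exact Finset.inf'_le _ (Finset.mem_univ i)
        · exact Finset.le_inf' _ _ (fun j _ => hmin j)
      have := Finset.le_sup' (f := fun k => (Finset.univ.inf' Finset.univ_nonempty
          (fun j => y j - ballVerts x₀ l k j)) + ballVerts x₀ l k i) (Finset.mem_univ i)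
      rw [ha] at this
      linarith
    · apply Finset.sup'_le
      intro k _
      have := Finset.inf'_le (fun j => y j - ballVerts x₀ l k j) (Finset.mem_univ i)
      linarith
  · rintro ⟨a, rfl⟩
    set f : Fin e → ℝ := fun i => Finset.univ.sup' Finset.univ_nonempty
      (fun k => a k + ballVerts x₀ l k i) with hf
    have key : ∀ i j : Fin e, (x₀ i - f i) - (x₀ j - f j) ≤ l := by
      intro i j
      obtain ⟨k, _, hk⟩ := Finset.exists_mem_eq_sup' (Finset.univ_nonempty)
        (fun k => a k + ballVerts x₀ l k j)
      have hfi : a k + ballVerts x₀ l k i ≤ f i :=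
        Finset.le_sup' (fun k => a k + ballVerts x₀ l k i) (Finset.mem_univ k)
      have hfj : f j = a k + ballVerts x₀ l k j := hk
      have hv := vdiff x₀ hx₀ l hl k i j
      linarith
    unfold tropDist
    obtain ⟨i, _, hi⟩ := Finset.exists_mem_eq_sup' (Finset.univ_nonempty)
      (fun i => x₀ i - f i)
    obtain ⟨j, _, hj⟩ := Finset.exists_mem_eq_inf' (Finset.univ_nonempty)
      (fun i => x₀ i - f i)
    rw [hi, hj]
    exact key i j
end

section
/- The Euclidean (Lebesgue) volume of a tropical ball of radius l in R^e/R1 (identified with R^{e−1} by normalizing the first coordinate to 0) equals e · l^{e−1}. -/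
open MeasureTheory Finset

namespace TropBallAux

variable {n : ℕ}

def tcube (n : ℕ) (l : ℝ) : Set (Fin n → ℝ) := {x | ∀ i, x i ∈ Set.Icc (0:ℝ) l}

def piece (j : Fin n) (l : ℝ) : Set (Fin n → ℝ) :=
  {x | x j ∈ Set.Icc (-l) 0 ∧ ∀ i, x i ∈ Set.Icc (x j) (x j + l)}

def shearMat (j : Fin n) : Matrix (Fin n) (Fin n) ℝ :=
  1 + Matrix.of fun i k => if k = j ∧ i ≠ j then 1 else 0

def shearBox (j : Fin n) (l : ℝ) : Set (Fin n → ℝ) :=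
  Set.pi Set.univ (fun i => if i = j then Set.Icc (-l) 0 else Set.Icc 0 l)

lemma tcube_eq (l : ℝ) : tcube n l = Set.pi Set.univ (fun _ => Set.Icc (0:ℝ) l) := by
  ext x
  simp only [tcube, Set.mem_pi, Set.mem_univ, forall_true_left, Set.mem_setOf_eq,
    Set.mem_Icc, forall_const]

lemma measurableSet_tcube (l : ℝ) : MeasurableSet (tcube n l) := by
  rw [tcube_eq]; exact MeasurableSet.univ_pi fun _ => measurableSet_Icc

lemma measurableSet_piece (j : Fin n) (l : ℝ) : MeasurableSet (piece j l) := by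
  have : piece j l = ({x : Fin n → ℝ | -l ≤ x j} ∩ {x | x j ≤ 0}) ∩
      ⋂ i, ({x : Fin n → ℝ | x j ≤ x i} ∩ {x | x i ≤ x j + l}) := by
    ext x
    simp only [piece, Set.mem_setOf_eq, Set.mem_Icc, Set.mem_inter_iff, Set.mem_iInter,
      forall_and]
  rw [this]
  refine MeasurableSet.inter (MeasurableSet.inter ?_ ?_) (MeasurableSet.iInter fun i =>
    MeasurableSet.inter ?_ ?_)
  · exact measurableSet_le measurable_const (measurable_pi_apply j)
  · exact measurableSet_le (measurable_pi_apply j) measurable_const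
  · exact measurableSet_le (measurable_pi_apply j) (measurable_pi_apply i)
  · exact measurableSet_le (measurable_pi_apply i) ((measurable_pi_apply j).add measurable_const)

lemma volume_tcube (l : ℝ) : volume (tcube n l) = ENNReal.ofReal l ^ n := by
  rw [tcube_eq, volume_pi_pi]
  simp [Real.volume_Icc]

lemma shear_apply (j : Fin n) (x : Fin n → ℝ) (i : Fin n) :
    Matrix.toLin' (shearMat j) x i = if i = j then x j else x i + x j := by
  rw [Matrix.toLin'_apply]
  simp only [shearMat, Matrix.add_mulVec, Matrix.one_mulVec, Pi.add_apply]
  by_cases hi : i = j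
  · simp [Matrix.mulVec, dotProduct, hi]
  · simp [Matrix.mulVec, dotProduct, hi, ite_mul, Finset.sum_ite_eq']

lemma det_shearMat (j : Fin n) : (shearMat j).det = 1 := by
  haveI : NeZero n := ⟨fun h => (h ▸ j).elim0⟩
  rw [← Matrix.det_submatrix_equiv_self (Equiv.swap (0 : Fin n) j) (shearMat j)]
  rw [Matrix.det_of_lowerTriangular]
  · apply Finset.prod_eq_one
    intro i _
    simp [shearMat, Matrix.submatrix_apply, Matrix.one_apply]
  · intro i k hk
    have hik : (i : Fin n) < k := hk
    have h1 : Equiv.swap (0 : Fin n) j i ≠ Equiv.swap (0 : Fin n) j k :=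
      fun h => hik.ne (Equiv.injective _ h)
    have h2 : Equiv.swap (0 : Fin n) j k ≠ j := by
      intro h
      have hk0 : k = 0 := by
        have := congrArg (Equiv.swap (0 : Fin n) j) h
        simpa [Equiv.swap_apply_self, Equiv.swap_apply_right] using this
      rw [hk0] at hik
      exact absurd hik (not_lt.mpr (Fin.zero_le i))
    simp [shearMat, Matrix.submatrix_apply, Matrix.one_apply, h1, h2]

lemma piece_eq_image (j : Fin n) (l : ℝ) (hl : 0 ≤ l) :
    piece j l = Matrix.toLin' (shearMat j) '' shearBox j l := by
  ext y
  constructor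
  · rintro ⟨h1, h2⟩
    refine ⟨fun i => if i = j then y j else y i - y j, fun i _ => ?_, funext fun i => ?_⟩
    · by_cases hi : i = j
      · simpa [hi] using h1
      · have := h2 i
        simp only [Set.mem_Icc] at this ⊢
        simp only [hi, if_false]
        constructor <;> [linarith [this.1]; linarith [this.2]]
    · rw [shear_apply]
      by_cases hi : i = j <;> simp [hi]
  · rintro ⟨x, hx, rfl⟩
    have hxj : x j ∈ Set.Icc (-l) 0 := by simpa using hx j (Set.mem_univ _)
    have hxi : ∀ i, i ≠ j → x i ∈ Set.Icc (0:ℝ) l := by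
      intro i hi
      simpa [hi] using hx i (Set.mem_univ _)
    have hj : Matrix.toLin' (shearMat j) x j = x j := by rw [shear_apply]; simp
    refine ⟨by rwa [hj], fun i => ?_⟩
    rw [hj, shear_apply]
    by_cases hi : i = j
    · subst hi
      rw [if_pos rfl]
      exact Set.mem_Icc.mpr ⟨le_rfl, by linarith⟩
    · simp only [hi, if_false, Set.mem_Icc]
      have := hxi i hi
      simp only [Set.mem_Icc] at this
      constructor <;> linarith [this.1, this.2]

lemma volume_shearBox (j : Fin n) (l : ℝ) : volume (shearBox j l) = ENNReal.ofReal l ^ n := by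
  unfold shearBox
  rw [volume_pi_pi]
  have : ∀ i : Fin n, volume (if i = j then Set.Icc (-l) 0 else Set.Icc (0:ℝ) l)
      = ENNReal.ofReal l := by
    intro i
    by_cases hi : i = j <;> simp [hi, Real.volume_Icc]
  rw [Finset.prod_congr rfl fun i _ => this i]
  simp

lemma volume_piece (j : Fin n) (l : ℝ) (hl : 0 ≤ l) :
    volume (piece j l) = ENNReal.ofReal l ^ n := by
  rw [piece_eq_image j l hl, Measure.addHaar_image_linearMap, LinearMap.det_toLin',
    det_shearMat, volume_shearBox]
  simp

lemma tball_eq (l : ℝ) (hl : 0 < l) :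
    {x : Fin n → ℝ | Finset.univ.sup' Finset.univ_nonempty (Fin.cons 0 x) -
      Finset.univ.inf' Finset.univ_nonempty (Fin.cons 0 x) ≤ l}
    = tcube n l ∪ ⋃ j, piece j l := by
  ext x
  simp only [Set.mem_setOf_eq, Set.mem_union, Set.mem_iUnion]
  set g : Fin (n+1) → ℝ := Fin.cons 0 x with hg
  have hg0 : g 0 = 0 := rfl
  have hgs : ∀ i, g i.succ = x i := fun i => rfl
  set m := Finset.univ.inf' Finset.univ_nonempty g with hm
  set M := Finset.univ.sup' Finset.univ_nonempty g with hM
  have hm0 : m ≤ 0 := by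
    have := Finset.inf'_le (b := (0 : Fin (n+1))) g (Finset.mem_univ _)
    rwa [hg0] at this
  have hM0 : 0 ≤ M := by
    have := Finset.le_sup' (b := (0 : Fin (n+1))) g (Finset.mem_univ _)
    rwa [hg0] at this
  have hmle : ∀ i, m ≤ g i := fun i => Finset.inf'_le g (Finset.mem_univ _)
  have hMge : ∀ i, g i ≤ M := fun i => Finset.le_sup' g (Finset.mem_univ _)
  constructor
  · intro hx
    by_cases hcase : 0 ≤ m
    · left
      have hme : m = 0 := le_antisymm hm0 hcase
      intro i
      refine Set.mem_Icc.mpr ⟨?_, ?_⟩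
      · have := hmle i.succ; rw [hgs] at this; linarith
      · have := hMge i.succ; rw [hgs] at this; linarith
    · right
      push_neg at hcase
      obtain ⟨i0, -, hi0⟩ := Finset.exists_mem_eq_inf' Finset.univ_nonempty g
      rcases Fin.eq_zero_or_eq_succ i0 with h0 | ⟨j, rfl⟩
      · rw [h0, hg0] at hi0; exact absurd hi0 (by linarith)
      · refine ⟨j, ?_, ?_⟩
        · have hxj : x j = m := by rw [← hgs j, ← hi0]
          refine Set.mem_Icc.mpr ⟨?_, ?_⟩ <;> rw [hxj]
          · linarith
          · linarith
        · intro i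
          have hxj : x j = m := by rw [← hgs j, ← hi0]
          have h1 := hmle i.succ
          have h2 := hMge i.succ
          rw [hgs] at h1 h2
          refine Set.mem_Icc.mpr ⟨by rw [hxj]; exact h1, by rw [hxj]; linarith⟩
  · rintro (hx | ⟨j, hj, hall⟩)
    · have h1 : M ≤ l := by
        refine Finset.sup'_le _ _ fun i _ => ?_
        refine Fin.cases ?_ ?_ i
        · rw [hg0]; exact hl.le
        · intro k; rw [hgs]; exact (hx k).2
      have h2 : 0 ≤ m := by
        refine Finset.le_inf' _ _ fun i _ => ?_
        refine Fin.cases ?_ ?_ i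
        · rw [hg0]
        · intro k; rw [hgs]; exact (hx k).1
      linarith
    · rw [Set.mem_Icc] at hj
      have h1 : M ≤ x j + l := by
        refine Finset.sup'_le _ _ fun i _ => ?_
        refine Fin.cases ?_ ?_ i
        · rw [hg0]; linarith [hj.1]
        · intro k; rw [hgs]; exact (hall k).2
      have h2 : x j ≤ m := by
        refine Finset.le_inf' _ _ fun i _ => ?_
        refine Fin.cases ?_ ?_ i
        · rw [hg0]; exact hj.2
        · intro k; rw [hgs]; exact (hall k).1
      linarith

lemma volume_eq_zero_eq (j : Fin n) : volume {x : Fin n → ℝ | x j = 0} = 0 := by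
  have heq : {x : Fin n → ℝ | x j = 0}
      = (LinearMap.ker (LinearMap.proj (R := ℝ) (φ := fun _ : Fin n => ℝ) j) :
          Submodule ℝ (Fin n → ℝ)) := by
    ext x; simp [LinearMap.mem_ker]
  rw [heq]
  apply Measure.addHaar_submodule
  intro h
  have := (Submodule.eq_top_iff'.mp h) (fun _ => 1)
  simp [LinearMap.mem_ker] at this

lemma volume_eq_coord_eq (j k : Fin n) (hjk : j ≠ k) :
    volume {x : Fin n → ℝ | x j = x k} = 0 := by
  have heq : {x : Fin n → ℝ | x j = x k}
      = (LinearMap.ker ((LinearMap.proj (R := ℝ) (φ := fun _ : Fin n => ℝ) j) -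
          (LinearMap.proj (R := ℝ) (φ := fun _ : Fin n => ℝ) k)) :
          Submodule ℝ (Fin n → ℝ)) := by
    ext x; simp [LinearMap.mem_ker, sub_eq_zero]
  rw [heq]
  apply Measure.addHaar_submodule
  intro h
  have := (Submodule.eq_top_iff'.mp h) (Pi.single j 1)
  simp [LinearMap.mem_ker, sub_eq_zero, Pi.single_apply, hjk.symm] at this

end TropBallAux

theorem tropBall_volume {n : ℕ} (c : Fin n → ℝ) (l : ℝ) (hl : 0 < l) :
    MeasureTheory.volume
      {y : Fin n → ℝ | tropDist (Fin.cons 0 c) (Fin.cons 0 y) ≤ l} =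
    ENNReal.ofReal ((n + 1) * l ^ n) := by
  classical
  open TropBallAux in
  have hfun : ∀ y : Fin n → ℝ,
      (fun i => Fin.cons (0:ℝ) c i - Fin.cons (0:ℝ) y i) = Fin.cons (0:ℝ) (c - y) := by
    intro y; funext i
    refine Fin.cases ?_ (fun k => ?_) i <;> simp
  have hset : {y : Fin n → ℝ | tropDist (Fin.cons 0 c) (Fin.cons 0 y) ≤ l}
      = (fun y => c - y) ⁻¹' (TropBallAux.tcube n l ∪ ⋃ j, TropBallAux.piece j l) := by
    ext y
    simp only [Set.mem_setOf_eq, Set.mem_preimage, tropDist]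
    rw [hfun y]
    exact Set.ext_iff.mp (TropBallAux.tball_eq l hl) (c - y)
  have hUM : MeasurableSet (TropBallAux.tcube n l ∪ ⋃ j, TropBallAux.piece j l) :=
    (TropBallAux.measurableSet_tcube l).union
      (MeasurableSet.iUnion fun j => TropBallAux.measurableSet_piece j l)
  have hpres : MeasureTheory.MeasurePreserving (fun y : Fin n → ℝ => c - y)
      MeasureTheory.volume MeasureTheory.volume := by
    have h1 : MeasureTheory.MeasurePreserving (fun y : Fin n → ℝ => -y)
        MeasureTheory.volume MeasureTheory.volume :=
      MeasureTheory.Measure.measurePreserving_neg _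
    have h2 : MeasureTheory.MeasurePreserving (fun y : Fin n → ℝ => c + y)
        MeasureTheory.volume MeasureTheory.volume :=
      MeasureTheory.measurePreserving_add_left MeasureTheory.volume c
    simpa [Function.comp_def, sub_eq_add_neg] using h2.comp h1
  rw [hset, hpres.measure_preimage hUM.nullMeasurableSet]
  have hd : MeasureTheory.AEDisjoint MeasureTheory.volume (TropBallAux.tcube n l)
      (⋃ j, TropBallAux.piece j l) := by
    have hsub : TropBallAux.tcube n l ∩ ⋃ j, TropBallAux.piece j l
        ⊆ ⋃ j, {x : Fin n → ℝ | x j = 0} := by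
      rw [Set.inter_iUnion]
      refine Set.iUnion_mono fun j => ?_
      rintro x ⟨hc, hp⟩
      exact le_antisymm (Set.mem_Icc.mp hp.1).2 (Set.mem_Icc.mp (hc j)).1
    exact measure_mono_null hsub
      (measure_iUnion_null fun j => TropBallAux.volume_eq_zero_eq j)
  have hpd : Pairwise (Function.onFun (MeasureTheory.AEDisjoint MeasureTheory.volume)
      fun j : Fin n => TropBallAux.piece j l) := by
    intro j k hjk
    have hsub : TropBallAux.piece j l ∩ TropBallAux.piece k l
        ⊆ {x : Fin n → ℝ | x j = x k} := by
      rintro x ⟨hj', hk'⟩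
      exact le_antisymm (Set.mem_Icc.mp (hj'.2 k)).1 (Set.mem_Icc.mp (hk'.2 j)).1
    exact measure_mono_null hsub (TropBallAux.volume_eq_coord_eq j k hjk)
  rw [MeasureTheory.measure_union₀
    ((MeasurableSet.iUnion fun j => TropBallAux.measurableSet_piece j l).nullMeasurableSet) hd]
  rw [MeasureTheory.measure_iUnion₀ hpd
    (fun j => (TropBallAux.measurableSet_piece j l).nullMeasurableSet)]
  rw [TropBallAux.volume_tcube l]
  rw [tsum_congr (fun j => TropBallAux.volume_piece j l hl.le), tsum_fintype]
  simp only [Finset.sum_const, Finset.card_univ, Fintype.card_fin, nsmul_eq_mul]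
  rw [ENNReal.ofReal_mul (by positivity), ENNReal.ofReal_pow hl.le]
  have hcast : ENNReal.ofReal ((n : ℝ) + 1) = (n : ENNReal) + 1 := by
    rw [ENNReal.ofReal_add (by positivity) zero_le_one, ENNReal.ofReal_natCast,
      ENNReal.ofReal_one]
  rw [hcast]
  ring
end
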